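/- arXiv:1705.08760 — 6 statements merged into one kernel-verified Lean document; each statement's English description precedes it below -/
import Mathlib

section
/- Let p₁, p₂, p₃ be primes and t a positive integer with p₃ < (t+1)p₂. Then for every x ∈ ℤ/p₃ℤ, the element mod_{p₂,p₁}(mod_{p₃,p₂}(x)) − mod_{p₃,p₁}(x) of ℤ/p₁ℤ lies in the set {−t·π_{p₁}(p₂), −(t−1)·π_{p₁}(p₂), …, 0}, i.e. equals −s·π_{p₁}(p₂) for some integer s with 0 ≤ s ≤ t. -/
theorem stmt_3 (p₁ p₂ p₃ : ℕ) (hp₁ : p₁.Prime) (hp₂ : p₂.Prime) (hp₃ : p₃.Prime)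
    (t : ℕ) (ht : 0 < t) (h : p₃ < (t + 1) * p₂) (x : ZMod p₃) :
    ∃ s : ℕ, s ≤ t ∧
      ((((x.val : ZMod p₂)).val : ZMod p₁) - ((x.val : ZMod p₁))
        = -(s : ZMod p₁) * (p₂ : ZMod p₁)) := by
  haveI : Fact p₃.Prime := ⟨hp₃⟩
  haveI : NeZero p₂ := ⟨hp₂.ne_zero⟩
  refine ⟨x.val / p₂, ?_, ?_⟩
  · have hx : x.val < (t + 1) * p₂ := lt_trans (ZMod.val_lt x) h
    have := (Nat.div_lt_iff_lt_mul hp₂.pos).2 hx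
    omega
  · rw [ZMod.val_natCast]
    have hmod : x.val % p₂ + p₂ * (x.val / p₂) = x.val := Nat.mod_add_div _ _
    have : ((x.val % p₂ + p₂ * (x.val / p₂) : ℕ) : ZMod p₁) = (x.val : ZMod p₁) := by
      rw [hmod]
    push_cast at this
    linear_combination this
end

section
/- Let ν₁, ν₂ be nonzero integers and λ₁, λ₂, μ₁, μ₂ integers, and let p be a prime greater than the absolute values of all these integers. Then there exist elements a, b, c, d ∈ ℤ/pℤ such that, setting α(x) = a·x + b and β(y) = c·y + d, the function (x,y) ↦ α(x)β(y) + (α(x) + ν₁x)(β(y) + ν₂y) + λ₁α(x) + μ₁x + λ₂β(y) + μ₂y is constant on (ℤ/pℤ)². -/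
theorem stmt_7 (ν₁ ν₂ l₁ l₂ μ₁ μ₂ : ℤ) (hν₁ : ν₁ ≠ 0) (hν₂ : ν₂ ≠ 0)
    (p : ℕ) (hp : p.Prime)
    (hbig : |ν₁| < p ∧ |ν₂| < p ∧ |l₁| < p ∧ |l₂| < p ∧ |μ₁| < p ∧ |μ₂| < p) :
    ∃ a b c d k : ZMod p, ∀ x y : ZMod p,
      (a * x + b) * (c * y + d)
        + ((a * x + b) + (ν₁ : ZMod p) * x) * ((c * y + d) + (ν₂ : ZMod p) * y)
        + (l₁ : ZMod p) * (a * x + b) + (μ₁ : ZMod p) * x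
        + (l₂ : ZMod p) * (c * y + d) + (μ₂ : ZMod p) * y = k := by
  haveI := Fact.mk hp
  have hN₁ : (ν₁ : ZMod p) ≠ 0 := by
    intro h
    have hd : (p : ℤ) ∣ ν₁ := (ZMod.intCast_zmod_eq_zero_iff_dvd _ _).1 h
    have : (p : ℤ) ≤ |ν₁| := Int.le_of_dvd (abs_pos.2 hν₁) ((dvd_abs _ _).2 hd)
    linarith [hbig.1]
  have hN₂ : (ν₂ : ZMod p) ≠ 0 := by
    intro h
    have hd : (p : ℤ) ∣ ν₂ := (ZMod.intCast_zmod_eq_zero_iff_dvd _ _).1 h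
    have : (p : ℤ) ≤ |ν₂| := Int.le_of_dvd (abs_pos.2 hν₂) ((dvd_abs _ _).2 hd)
    linarith [hbig.2.1]
  set b : ZMod p := -μ₂ * (ν₂ : ZMod p)⁻¹ with hb
  set d : ZMod p := μ₁ * (ν₁ : ZMod p)⁻¹ - l₁ with hd
  refine ⟨-(ν₁ : ZMod p), b, 0, d, 2 * b * d + l₁ * b + l₂ * d, fun x y => ?_⟩
  rw [hb, hd]
  field_simp
  ring
end

section
/- There is a constant C > 0 such that: for every prime p and every polynomial f of degree at most d over ℤ/pℤ, if the number of representations function F(x) = #{t ∈ ℤ/pℤ : f(t) = x} satisfies |F̂(r)| ≤ Cp^{1−2^{−d}} for all r ≠ 0 (where F̂(r) = Σ_x F(x)e_p(−rx)), then f attains a value in the interval {−2k,…,2k} ⊂ ℤ/pℤ whenever 2k+1 > Cp^{1−2^{−d}}. Consequently, assuming Weyl's inequality, every polynomial of degree at most d over ℤ/pℤ with some nonconstant coefficient nonzero attains a value of the form π_p(m) with |m| ≤ C_d·p^{1−2^{−d}} for an absolute constant C_d. -/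
open Finset Polynomial Pointwise
open ZMod (stdAddChar)

/-!
Write `e = stdAddChar`, let `S ⊆ ℤ/pℤ` be the image of `{-k, …, k}`, and put
`A a = ∑ s ∈ S, e (a * s)` and `T a = ∑ t, e (-(a * f t))`. Orthogonality of characters gives
`p * #{(t, s₁, s₂) | f t = s₁ - s₂} = ∑ a, |A a|² * T a`.
The term `a = 0` is `|S|² * p`. If `|T a| ≤ M` for `a ≠ 0` (note `T a = F̂ a`), then by Parseval,
`∑ a, |A a|² = p * |S|`, the remaining terms contribute at least `-M * p * |S|`. Hence the count
is positive once `|S| = 2k + 1 > M`, and `f` takes a value in `S - S ⊆ {-2k, …, 2k}`.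

For the second part the bound `|T a| ≤ 2 p ^ (1 - 2 ^ (-d))` comes from Weyl differencing,
`|∑ x, e (f x)|² ≤ ∑ u, |∑ x, e (f (x + u) - f x)|`: for `u ≠ 0` and `deg f < p` the polynomial
`f (X + u) - f` has degree exactly `deg f - 1`, and induction on the degree gives
`|∑ x, e (f x)| ≤ 2 p ^ (1 - 2 ^ (1 - deg f))`. When `p ≤ d` every residue is some `m` with
`|m| ≤ p / 2`.
-/

theorem norm_sum_sq_le_sum_norm_sum_sub {G A : Type*} [AddCommGroup G] [Fintype G]
    [AddCommGroup A] [Finite A] (ψ : AddChar A ℂ) (φ : G → A) :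
    ‖∑ x, ψ (φ x)‖ ^ 2 ≤ ∑ u, ‖∑ x, ψ (φ (x + u) - φ x)‖ := by
  have hsq : ((‖∑ x, ψ (φ x)‖ ^ 2 : ℝ) : ℂ) = ∑ u, ∑ x, ψ (φ (x + u) - φ x) := by
    rw [Complex.ofReal_pow, ← Complex.mul_conj', map_sum, Finset.sum_comm, Finset.mul_sum]
    refine Fintype.sum_congr _ _ fun x => ?_
    rw [Finset.sum_mul, ← Equiv.sum_comp (Equiv.addLeft x)]
    simp [sub_eq_add_neg, AddChar.map_add_eq_mul, AddChar.map_neg_eq_conj]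
  calc ‖∑ x, ψ (φ x)‖ ^ 2 = ‖∑ u, ∑ x, ψ (φ (x + u) - φ x)‖ := by
        rw [← hsq, Complex.norm_real, Real.norm_of_nonneg (by positivity)]
    _ ≤ _ := norm_sum_le _ _

theorem natDegree_taylor_sub_self {R : Type*} [CommRing R] [NoZeroDivisors R] {f : R[X]} {u : R}
    (hu : u ≠ 0) (hf : (f.natDegree : R) ≠ 0) :
    (taylor u f - f).natDegree = f.natDegree - 1 := by
  have hn : f.natDegree - 1 + 1 = f.natDegree :=
    Nat.sub_add_cancel (Nat.one_le_iff_ne_zero.2 fun h => hf (by simp [h]))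
  have hD : (hasseDeriv (f.natDegree - 1) f).natDegree ≤ 1 :=
    (natDegree_hasseDeriv_le f _).trans (by omega)
  have hcoeff : (taylor u f - f).coeff (f.natDegree - 1) = f.natDegree * f.leadingCoeff * u := by
    rw [coeff_sub, taylor_coeff, eq_X_add_C_of_natDegree_le_one hD, hasseDeriv_coeff,
      hasseDeriv_coeff, add_comm 1, hn, zero_add, Nat.choose_self,
      Nat.choose_symm_of_eq_add hn.symm]
    simp
  apply le_antisymm
  · refine natDegree_le_pred ((natDegree_sub_le _ _).trans (by rw [natDegree_taylor, max_self])) ?_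
    rw [coeff_sub, coeff_taylor_natDegree, leadingCoeff, sub_self]
  · refine le_natDegree_of_ne_zero ?_
    rw [hcoeff]
    exact mul_ne_zero (mul_ne_zero hf (leadingCoeff_ne_zero.2 (by rintro rfl; simp at hf))) hu

theorem add_sub_one_mul_two_mul_rpow_le {p α : ℝ} (hp : 1 ≤ p) (hα : 0 ≤ α) :
    p + (p - 1) * (2 * p ^ α) ≤ (2 * p ^ ((1 + α) / 2)) ^ 2 := by
  have hpα : 1 ≤ p ^ α := Real.one_le_rpow hp hα
  have hsq : (p ^ ((1 + α) / 2)) ^ 2 = p * p ^ α := by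
    rw [← Real.rpow_natCast, ← Real.rpow_mul (by linarith), Nat.cast_two,
      div_mul_cancel₀ _ two_ne_zero, Real.rpow_add (by linarith), Real.rpow_one]
  rw [mul_pow, hsq]
  nlinarith

theorem two_rpow_one_sub_succ (n : ℕ) :
    (2 : ℝ) ^ (1 - ((n + 1 : ℕ) : ℝ)) = 2 ^ (1 - (n : ℝ)) / 2 := by
  rw [← Real.rpow_sub_one two_ne_zero]
  push_cast
  ring_nf

section Weyl

variable {p : ℕ} [Fact p.Prime]

theorem sum_stdAddChar_eval_eq_zero {f : (ZMod p)[X]} (hf : f.natDegree = 1) :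
    ∑ x, stdAddChar (f.eval x) = 0 := by
  classical
  have ha : f.coeff 1 ≠ 0 := by
    rw [← hf]; exact leadingCoeff_ne_zero.2 (by rintro rfl; simp at hf)
  rw [eq_X_add_C_of_natDegree_le_one hf.le]
  simp only [eval_add, eval_mul, eval_C, eval_X, AddChar.map_add_eq_mul, ← Finset.sum_mul,
    mul_comm (f.coeff 1)]
  rw [AddChar.sum_mulShift _ (ZMod.isPrimitive_stdAddChar p), if_neg ha, Nat.cast_zero, zero_mul]

theorem norm_sum_stdAddChar_eval_le {f : (ZMod p)[X]} (hf1 : 1 ≤ f.natDegree)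
    (hfp : f.natDegree < p) :
    ‖∑ x, stdAddChar (f.eval x)‖ ≤ 2 * (p : ℝ) ^ (1 - (2 : ℝ) ^ (1 - (f.natDegree : ℝ))) := by
  have hp1 : (1 : ℝ) ≤ p := mod_cast (Fact.out : p.Prime).one_le
  obtain ⟨n, hn⟩ : ∃ n, f.natDegree = n := ⟨_, rfl⟩
  rw [hn] at hf1 hfp ⊢
  induction n, hf1 using Nat.le_induction generalizing f with
  | base =>
    rw [sum_stdAddChar_eval_eq_zero hn, norm_zero]
    positivity
  | succ n hn1 ih =>
    set α : ℝ := 1 - 2 ^ (1 - (n : ℝ))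
    have hα : 0 ≤ α := sub_nonneg.2 (Real.rpow_le_one_of_one_le_of_nonpos one_le_two
      (by linarith [(Nat.one_le_cast (α := ℝ)).2 hn1]))
    have hdiff : ∀ u : ZMod p, u ≠ 0 → ‖∑ x, stdAddChar ((taylor u f - f).eval x)‖
        ≤ 2 * (p : ℝ) ^ α := by
      intro u hu
      have hdeg : (taylor u f - f).natDegree = n := by
        have hp : ((n + 1 : ℕ) : ZMod p) ≠ 0 := by
          rw [Ne, ZMod.natCast_eq_zero_iff]
          exact Nat.not_dvd_of_pos_of_lt n.succ_pos hfp
        rw [natDegree_taylor_sub_self hu (hn ▸ hp), hn, Nat.add_sub_cancel]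
      exact ih (by omega) hdeg
    have hsum : ∑ u, ‖∑ x, stdAddChar (f.eval (x + u) - f.eval x)‖
        ≤ p + (p - 1) * (2 * (p : ℝ) ^ α) := by
      rw [← Finset.add_sum_erase _ _ (mem_univ 0)]
      gcongr
      · simp [ZMod.card]
      · have hcard : ((univ.erase (0 : ZMod p)).card : ℝ) = p - 1 := by
          rw [card_erase_of_mem (mem_univ _), card_univ, ZMod.card,
            Nat.cast_sub (Fact.out : p.Prime).one_le, Nat.cast_one]
        rw [← hcard, ← nsmul_eq_mul]
        refine sum_le_card_nsmul _ _ _ fun u hu => ?_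
        simpa only [eval_sub, taylor_eval] using hdiff u (ne_of_mem_erase hu)
    have := norm_sum_sq_le_sum_norm_sum_sub stdAddChar f.eval
    rw [two_rpow_one_sub_succ, show 1 - 2 ^ (1 - (n : ℝ)) / 2 = (1 + α) / 2 by ring]
    exact le_of_sq_le_sq (by linarith [add_sub_one_mul_two_mul_rpow_le hp1 hα]) (by positivity)

end Weyl

section Counting

theorem card_image_intCast_Icc {N k : ℕ} (hk : 2 * k < N) :
    #((Icc (-k : ℤ) k).image (Int.cast : ℤ → ZMod N)) = 2 * k + 1 := by
  rw [card_image_of_injOn, Int.card_Icc]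
  · omega
  · intro i hi j hj hij
    rw [coe_Icc, Set.mem_Icc] at hi hj
    rw [ZMod.intCast_eq_intCast_iff_dvd_sub] at hij
    have := Int.eq_zero_of_abs_lt_dvd hij (by rw [abs_lt]; omega)
    omega

variable {N : ℕ} [NeZero N]

theorem sum_normSq_mul_sum_eq_card {α : Type*} [Fintype α] (g : α → ZMod N)
    (S : Finset (ZMod N)) :
    ∑ a : ZMod N, (Complex.normSq (∑ s ∈ S, stdAddChar (a * s)) : ℂ) *
        ∑ t, stdAddChar (-(a * g t))
      = N * #{x ∈ univ ×ˢ S ×ˢ S | g x.1 = x.2.1 - x.2.2} := by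
  classical
  have hA : ∀ a : ZMod N, (Complex.normSq (∑ s ∈ S, stdAddChar (a * s)) : ℂ)
      = ∑ s₁ ∈ S, ∑ s₂ ∈ S, stdAddChar (a * (s₁ - s₂)) := by
    intro a
    rw [← Complex.mul_conj, map_sum, sum_mul_sum]
    simp only [sub_eq_add_neg, mul_add, mul_neg, AddChar.map_add_eq_mul, AddChar.map_neg_eq_conj]
  calc _ = ∑ a : ZMod N, ∑ t, ∑ s₁ ∈ S, ∑ s₂ ∈ S, stdAddChar (a * (s₁ - s₂ - g t)) := by
        simp only [hA, sum_mul, mul_sum, ← AddChar.map_add_eq_mul, sub_eq_add_neg, mul_add, mul_neg]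
    _ = ∑ t, ∑ s₁ ∈ S, ∑ s₂ ∈ S, ∑ a : ZMod N, stdAddChar (a * (s₁ - s₂ - g t)) := by
        rw [sum_comm]
        refine sum_congr rfl fun _ _ => ?_
        rw [sum_comm]
        exact sum_congr rfl fun _ _ => sum_comm
    _ = _ := by
        simp only [AddChar.sum_mulShift _ (ZMod.isPrimitive_stdAddChar N), ZMod.card, card_filter,
          sum_product, Nat.cast_sum, mul_sum, sub_eq_zero, eq_comm (a := g _)]
        simp

theorem sum_normSq_sum_stdAddChar (S : Finset (ZMod N)) :
    ∑ a : ZMod N, Complex.normSq (∑ s ∈ S, stdAddChar (a * s)) = N * #S := by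
  have h := sum_normSq_mul_sum_eq_card (fun _ : Unit => (0 : ZMod N)) S
  simp only [mul_zero, neg_zero, AddChar.map_zero_eq_one, Fintype.sum_unique, mul_one] at h
  have hdiag : #{x ∈ (univ : Finset Unit) ×ˢ S ×ˢ S | (0 : ZMod N) = x.2.1 - x.2.2} = #S := by
    simp only [card_filter, sum_product, eq_comm (a := (0 : ZMod N)), sub_eq_zero, sum_ite_eq,
      univ_unique, sum_singleton]
    simp
  rw [hdiag] at h
  exact_mod_cast h

theorem exists_mem_sub_of_norm_sum_le {α : Type*} [Fintype α] (g : α → ZMod N)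
    (S : Finset (ZMod N)) {M : ℝ} (hM0 : 0 ≤ M)
    (hM : ∀ a ≠ 0, ‖∑ t, stdAddChar (a * g t)‖ ≤ M)
    (hS : N * M < #S * Fintype.card α) :
    ∃ t, g t ∈ S - S := by
  classical
  set A : ZMod N → ℝ := fun a => Complex.normSq (∑ s ∈ S, stdAddChar (a * s))
  set T : ZMod N → ℝ := fun a => (∑ t, stdAddChar (-(a * g t))).re
  have hcount : ∑ a, A a * T a = N * #{x ∈ univ ×ˢ S ×ˢ S | g x.1 = x.2.1 - x.2.2} := by
    have := congrArg Complex.re (sum_normSq_mul_sum_eq_card g S)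
    simpa [A, T, Complex.re_sum, Complex.re_ofReal_mul] using this
  have hT : ∀ a, -M ≤ T a := by
    intro a
    rcases eq_or_ne a 0 with rfl | ha
    · simp [T]; linarith
    · have := hM (-a) (neg_ne_zero.2 ha)
      simp only [neg_mul] at this
      exact (neg_le_neg this).trans (neg_le_of_abs_le (Complex.abs_re_le_norm _))
  have hA0 : A 0 = #S ^ 2 := by simp [A, sq]
  have hT0 : T 0 = Fintype.card α := by simp [T]
  have hlower : A 0 * (T 0 + M) ≤ ∑ a, A a * (T a + M) :=
    single_le_sum (f := fun a => A a * (T a + M))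
      (fun a _ => mul_nonneg (Complex.normSq_nonneg _) (by linarith [hT a])) (mem_univ 0)
  have hN : (0 : ℝ) < N := mod_cast NeZero.pos N
  have hgap : (0 : ℝ) < #S * Fintype.card α - N * M := by linarith
  have hS0 : (0 : ℝ) < #S := by
    have : (0 : ℝ) < #S * Fintype.card α := lt_of_le_of_lt (by positivity) hS
    exact pos_of_mul_pos_left this (by positivity)
  have hpos : 0 < #{x ∈ univ ×ˢ S ×ˢ S | g x.1 = x.2.1 - x.2.2} := by
    have : (0 : ℝ) < N * #{x ∈ univ ×ˢ S ×ˢ S | g x.1 = x.2.1 - x.2.2} := by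
      have hpars : ∑ a, A a = N * #S := sum_normSq_sum_stdAddChar S
      simp only [mul_add, sum_add_distrib, ← sum_mul, hcount, hpars, hA0, hT0] at hlower
      nlinarith [mul_pos hS0 hgap]
    exact_mod_cast pos_of_mul_pos_right this hN.le
  obtain ⟨⟨t, s₁, s₂⟩, hx⟩ := card_pos.1 hpos
  simp only [mem_filter, mem_product] at hx
  exact ⟨t, hx.2 ▸ sub_mem_sub hx.1.2.1 hx.1.2.2⟩

theorem exists_intCast_eq_of_norm_sum_le {α : Type*} [Fintype α] (g : α → ZMod N) {M : ℝ}
    (hM0 : 0 ≤ M) (hM : ∀ a ≠ 0, ‖∑ t, stdAddChar (a * g t)‖ ≤ M) {k : ℕ}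
    (hk : N * M < (2 * k + 1) * Fintype.card α) :
    ∃ m : ℤ, |m| ≤ 2 * k ∧ ∃ t, g t = m := by
  rcases lt_or_ge (2 * k) N with hkN | hNk
  · obtain ⟨t, ht⟩ := exists_mem_sub_of_norm_sum_le g _ hM0 hM
      (by rwa [card_image_intCast_Icc hkN, Nat.cast_add_one, Nat.cast_mul, Nat.cast_two])
    obtain ⟨x, hx, y, hy, hxy⟩ := mem_sub.1 ht
    obtain ⟨i, hi, rfl⟩ := mem_image.1 hx
    obtain ⟨j, hj, rfl⟩ := mem_image.1 hy
    rw [mem_Icc] at hi hj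
    exact ⟨i - j, by rw [abs_le]; omega, t, by push_cast; exact hxy.symm⟩
  · have : 0 < Fintype.card α := by
      have : (0 : ℝ) < (2 * k + 1) * Fintype.card α := lt_of_le_of_lt (by positivity) hk
      exact_mod_cast pos_of_mul_pos_right this (by positivity)
    obtain ⟨t⟩ := Fintype.card_pos_iff.1 this
    refine ⟨(g t).valMinAbs, ?_, t, (ZMod.coe_valMinAbs _).symm⟩
    have := ZMod.natAbs_valMinAbs_le (g t)
    rw [Int.abs_eq_natAbs]
    omega

end Counting

section Fourier

variable {N : ℕ} [NeZero N]

theorem sum_range_comp_natCast {M : Type*} [AddCommMonoid M] (F : ZMod N → M) :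
    ∑ i ∈ range N, F i = ∑ x, F x :=
  sum_nbij' (↑) ZMod.val (fun _ _ => mem_univ _) (fun x _ => mem_range.2 x.val_lt)
    (fun _ hi => ZMod.val_cast_of_lt (mem_range.1 hi)) (fun x _ => ZMod.natCast_zmod_val x)
    (fun _ _ => rfl)

theorem sum_card_fiber_mul_exp_eq (g : ZMod N → ZMod N) (r : ℕ) :
    ∑ x ∈ range N, (#((range N).filter fun t : ℕ => g t = x) : ℂ) *
        Complex.exp (-2 * Real.pi * Complex.I * r * x / N)
      = ∑ t, stdAddChar (-((r : ZMod N) * g t)) := by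
  classical
  have hexp : ∀ x : ℕ, Complex.exp (-2 * Real.pi * Complex.I * r * x / N)
      = stdAddChar (-(r * x : ZMod N)) := by
    intro x
    have := ZMod.stdAddChar_coe (N := N) (-(r * x : ℤ))
    push_cast at this
    rw [this]
    ring_nf
  have hcard : ∀ y : ZMod N, #((range N).filter fun t : ℕ => g t = y) = #{t | g t = y} := by
    intro y
    rw [card_filter, card_filter, sum_range_comp_natCast (fun t => if g t = y then 1 else 0)]
  simp only [hexp, hcard]
  rw [sum_range_comp_natCast (fun y => (#{t | g t = y} : ℂ) * stdAddChar (-((r : ZMod N) * y))),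
    ← sum_fiberwise univ g fun t => stdAddChar (-((r : ZMod N) * g t))]
  refine sum_congr rfl fun y _ => ?_
  rw [sum_congr rfl fun t ht => by rw [(mem_filter.1 ht).2], sum_const, nsmul_eq_mul]

end Fourier

theorem rpow_one_sub_two_rpow_le {p : ℝ} (hp : 1 ≤ p) {e d : ℕ} (hed : e ≤ d) :
    p ^ (1 - (2 : ℝ) ^ (1 - (e : ℝ))) ≤ p ^ (1 - (2 : ℝ) ^ (-(d : ℝ))) := by
  refine Real.rpow_le_rpow_of_exponent_le hp (sub_le_sub_left ?_ _)
  refine Real.rpow_le_rpow_of_exponent_le one_le_two ?_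
  have : (e : ℝ) ≤ d := mod_cast hed
  linarith

theorem exists_eval_eq_intCast_abs_le {p : ℕ} [Fact p.Prime] {f : (ZMod p)[X]} {d : ℕ}
    (hfd : f.natDegree ≤ d) (hf : 1 ≤ f.natDegree) :
    ∃ m : ℤ, (|m| : ℝ) ≤ (d + 4) * (p : ℝ) ^ (1 - (2 : ℝ) ^ (-(d : ℝ))) ∧
      ∃ t, f.eval t = m := by
  set γ : ℝ := 1 - (2 : ℝ) ^ (-(d : ℝ))
  have hp1 : (1 : ℝ) ≤ p := mod_cast (Fact.out : p.Prime).one_le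
  have hγ : 1 ≤ (p : ℝ) ^ γ :=
    Real.one_le_rpow hp1 (sub_nonneg.2 (Real.rpow_le_one_of_one_le_of_nonpos one_le_two
      (by simp)))
  rcases le_or_gt p d with hpd | hdp
  · refine ⟨(f.eval 0).valMinAbs, ?_, 0, (ZMod.coe_valMinAbs _).symm⟩
    have hm : ((f.eval 0).valMinAbs.natAbs : ℝ) ≤ d :=
      mod_cast (ZMod.natAbs_valMinAbs_le _).trans ((Nat.div_le_self _ _).trans hpd)
    rw [Nat.cast_natAbs, Int.cast_abs] at hm
    nlinarith
  · have hsum : ∀ a : ZMod p, a ≠ 0 → ‖∑ t, stdAddChar (a * f.eval t)‖ ≤ 2 * (p : ℝ) ^ γ := by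
      intro a ha
      have hdeg : (C a * f).natDegree = f.natDegree := natDegree_C_mul ha
      have := norm_sum_stdAddChar_eval_le (f := C a * f) (by omega) (by omega)
      simp only [eval_mul, eval_C, hdeg] at this
      linarith [rpow_one_sub_two_rpow_le hp1 hfd]
    obtain ⟨m, hm, t, ht⟩ := exists_intCast_eq_of_norm_sum_le f.eval (by positivity) hsum
      (k := ⌈(p : ℝ) ^ γ⌉₊) (by
        rw [ZMod.card, mul_comm (p : ℝ)]
        exact mul_lt_mul_of_pos_right (by linarith [Nat.le_ceil ((p : ℝ) ^ γ)]) (by positivity))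
    refine ⟨m, ?_, t, ht⟩
    have hk : (⌈(p : ℝ) ^ γ⌉₊ : ℝ) < (p : ℝ) ^ γ + 1 := Nat.ceil_lt_add_one (by positivity)
    have : (|m| : ℝ) ≤ 2 * ⌈(p : ℝ) ^ γ⌉₊ := by exact_mod_cast hm
    nlinarith

theorem stmt_9 (d : ℕ) :
    (∃ C : ℝ, 0 < C ∧ ∀ (p : ℕ), p.Prime → ∀ f : Polynomial (ZMod p), f.natDegree ≤ d →
      (∀ r : ℕ, r < p → r ≠ 0 →
        ‖∑ x ∈ Finset.range p,
          (((Finset.range p).filter (fun t : ℕ => f.eval (t : ZMod p) = (x : ZMod p))).card : ℂ) *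
            Complex.exp (-2 * Real.pi * Complex.I * r * x / p)‖
          ≤ C * (p : ℝ) ^ ((1 : ℝ) - 2 ^ (-(d : ℝ)))) →
      ∀ k : ℕ, C * (p : ℝ) ^ ((1 : ℝ) - 2 ^ (-(d : ℝ))) < 2 * k + 1 →
        ∃ m : ℤ, |m| ≤ 2 * k ∧ ∃ t : ZMod p, f.eval t = (m : ZMod p))
    ∧
    ((∀ ε : ℝ, 0 < ε → ∃ Cw : ℝ, 0 < Cw ∧ ∀ (p : ℕ), p.Prime →
        ∀ g : Polynomial (ZMod p), g.natDegree = d →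
          ‖∑ x ∈ Finset.range p,
            Complex.exp (2 * Real.pi * Complex.I * ((g.eval (x : ZMod p)).val : ℂ) / p)‖
            ≤ Cw * (p : ℝ) ^ (1 + ε - 2 ^ (1 - (d : ℝ)))) →
      ∃ Cd : ℝ, 0 < Cd ∧ ∀ (p : ℕ), p.Prime → ∀ f : Polynomial (ZMod p),
        f.natDegree ≤ d → (∃ i : ℕ, 1 ≤ i ∧ f.coeff i ≠ 0) →
        ∃ m : ℤ, (|m| : ℝ) ≤ Cd * (p : ℝ) ^ ((1 : ℝ) - 2 ^ (-(d : ℝ))) ∧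
          ∃ t : ZMod p, f.eval t = (m : ZMod p)) := by
  refine ⟨⟨1, one_pos, fun p hp f _ hhat k hk => ?_⟩,
    fun _ => ⟨d + 4, by positivity, fun p hp f hfd ⟨i, hi, hfi⟩ => ?_⟩⟩
  · have : NeZero p := ⟨hp.ne_zero⟩
    refine exists_intCast_eq_of_norm_sum_le f.eval (M := 1 * (p : ℝ) ^ (1 - (2 : ℝ) ^ (-(d : ℝ))))
      (by positivity) (fun a ha => ?_) ?_
    · have hfourier := sum_card_fiber_mul_exp_eq (fun x => f.eval x) (-a).val
      rw [ZMod.natCast_zmod_val] at hfourier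
      have h := hhat (-a).val (ZMod.val_lt _) (by simpa using ha)
      rw [hfourier] at h
      simpa only [neg_mul, neg_neg] using h
    · rw [ZMod.card, mul_comm (p : ℝ)]
      exact mul_lt_mul_of_pos_right hk (mod_cast hp.pos)
  · have : Fact p.Prime := ⟨hp⟩
    exact exists_eval_eq_intCast_abs_le hfd (hi.trans (le_natDegree_of_ne_zero hfi))
end

section
/- Let n ≥ 1 and let P, Q, I', J be (n+1)×(n+1) matrices over a field of characteristic ≠ 2, where I' is the diagonal matrix with I'₀₀ = 0 and I'ᵢᵢ = 1 for 1 ≤ i ≤ n, J has a single nonzero entry J₀₀ = 1, the 0-th column of P is zero, and the 0-th row of Q is zero. Then for no nonzero scalar λ can the equation 2PQ + PI' + QI' + I' = λJ hold. -/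
/-!
Write `J = E₀₀` and `I' = 1 - J`. Since `J` is idempotent and `J * Q = 0`, one has
`(2P + I')(2Q + I') = 2(2PQ + PI' + QI' + I') + 2QJ - I'`, so the equation would give
`(2P + I')(2Q + I') = 2(λ + Q)J - I'`. The left factor has zero `0`-th column, hence determinant
`0`, while the right-hand side is lower triangular with diagonal `(2λ, -1, …, -1)`, hence has
determinant `2λ(-1)ⁿ ≠ 0`.
-/

theorem IsIdempotentElem.two_nsmul_add_one_sub_mul_two_nsmul_add_one_sub {R : Type*} [Ring R]
    {j p q : R} (hj : IsIdempotentElem j) (hjq : j * q = 0) :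
    (2 • p + (1 - j)) * (2 • q + (1 - j)) =
      2 • (2 • (p * q) + p * (1 - j) + q * (1 - j) + (1 - j)) + 2 • (q * j) - (1 - j) := by
  have expand : (2 • p + (1 - j)) * (2 • q + (1 - j)) =
      4 • (p * q) + 2 • (p * (1 - j)) + 2 • q - 2 • (j * q) + (1 - j) * (1 - j) := by
    noncomm_ring
  rw [expand, hjq, hj.one_sub.eq]
  noncomm_ring

namespace Matrix

variable {R : Type*} [CommRing R]

theorem diagonal_ite_eq_one_sub_single {n : ℕ} :
    diagonal (fun i : Fin (n + 1) => if i = 0 then (0 : R) else 1) = 1 - single 0 0 1 := by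
  ext i j
  by_cases hij : i = j
  · subst hij
    by_cases hi : i = 0 <;> simp [hi, Ne.symm]
  · simp [hij, one_apply_ne, single_apply, diagonal_apply_ne]
    grind

theorem det_mul_single_sub_one_sub_single {n : ℕ} (M : Matrix (Fin (n + 1)) (Fin (n + 1)) R) :
    (M * single 0 0 1 - (1 - single 0 0 1)).det = M 0 0 * (-1) ^ n := by
  rw [det_of_isLowerTriangular]
  · simp [Fin.prod_univ_succ, Fin.succ_ne_zero, Ne.symm]
  · intro i j hji
    have hij : i < j := OrderDual.toDual_lt_toDual.mp hji
    have hj : j ≠ 0 := Fin.ne_zero_of_lt hij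
    simp [hj, one_apply_ne hij.ne, Ne.symm hj]

variable {ι : Type*} [Fintype ι] [DecidableEq ι]

theorem isIdempotentElem_single_one (i : ι) : IsIdempotentElem (single i i (1 : R)) := by
  simp [IsIdempotentElem]

theorem single_one_mul_of_row_eq_zero {i : ι} {Q : Matrix ι ι R} (hQ : ∀ j, Q i j = 0) :
    single i i 1 * Q = 0 := by
  ext k j
  by_cases hk : k = i
  · simp [hk, hQ]
  · simp [hk]

theorem det_nsmul_add_one_sub_single_eq_zero {i : ι} {P : Matrix ι ι R} (hP : ∀ k, P k i = 0)
    (m : ℕ) : (m • P + (1 - single i i 1)).det = 0 :=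
  det_eq_zero_of_column_eq_zero i fun k => by
    rw [add_apply, smul_apply, hP, smul_zero, zero_add]
    by_cases hk : k = i
    · simp [hk]
    · simp [hk, one_apply_ne, Ne.symm hk]

end Matrix

theorem stmt_12_general {K : Type*} [Field K] (hchar : (2 : K) ≠ 0) (n : ℕ)
    (P Q : Matrix (Fin (n + 1)) (Fin (n + 1)) K)
    (hP : ∀ i, P i 0 = 0) (hQ : ∀ j, Q 0 j = 0)
    (lam : K) (hlam : lam ≠ 0) :
    let I' : Matrix (Fin (n + 1)) (Fin (n + 1)) K :=
      Matrix.diagonal (fun i => if i = 0 then 0 else 1)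
    let J : Matrix (Fin (n + 1)) (Fin (n + 1)) K := Matrix.single 0 0 1
    2 • (P * Q) + P * I' + Q * I' + I' ≠ lam • J := by
  intro I' J h
  have hI' : I' = 1 - J := Matrix.diagonal_ite_eq_one_sub_single
  have hfactor := (Matrix.isIdempotentElem_single_one (R := K) 0)
    |>.two_nsmul_add_one_sub_mul_two_nsmul_add_one_sub (p := P)
      (Matrix.single_one_mul_of_row_eq_zero hQ)
  rw [← hI', h, hI'] at hfactor
  have hrhs : 2 • (lam • J) + 2 • (Q * J) = (2 • (lam • 1 + Q)) * J := by
    rw [smul_mul_assoc, add_mul, smul_mul_assoc, one_mul, smul_add]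
  rw [hrhs] at hfactor
  have hdet := congrArg Matrix.det hfactor
  rw [Matrix.det_mul, Matrix.det_nsmul_add_one_sub_single_eq_zero hP, zero_mul,
    Matrix.det_mul_single_sub_one_sub_single] at hdet
  have hentry : (2 • (lam • 1 + Q) : Matrix (Fin (n + 1)) (Fin (n + 1)) K) 0 0 = 2 * lam := by
    simp [hQ, two_mul]
  rw [hentry] at hdet
  exact mul_ne_zero (mul_ne_zero hchar hlam) (pow_ne_zero n (neg_ne_zero.mpr one_ne_zero)) hdet.symm

theorem stmt_12 {K : Type*} [Field K] (hchar : (2 : K) ≠ 0) (n : ℕ) (hn : 1 ≤ n)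
    (P Q : Matrix (Fin (n + 1)) (Fin (n + 1)) K)
    (hP : ∀ i, P i 0 = 0) (hQ : ∀ j, Q 0 j = 0)
    (lam : K) (hlam : lam ≠ 0) :
    let I' : Matrix (Fin (n + 1)) (Fin (n + 1)) K :=
      Matrix.diagonal (fun i => if i = 0 then 0 else 1)
    let J : Matrix (Fin (n + 1)) (Fin (n + 1)) K := Matrix.single 0 0 1
    2 • (P * Q) + P * I' + Q * I' + I' ≠ lam • J :=
  stmt_12_general hchar n P Q hP hQ lam hlam
end

section
/- Let p and q be distinct primes. For any functions α, β : ℤ/pqℤ → ℤ/pqℤ, the map (x,y) ↦ α(x)·β(y) + x + y from (ℤ/pqℤ)² to ℤ/pqℤ attains at least c·min{p,q} values, for an absolute constant c > 0 (e.g. if some α(x) is not a unit, it attains at least min{p,q} values). -/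
lemma aux_surj_case {n m : ℕ} [NeZero n] [NeZero m] (h : m ∣ n)
    (α β : ZMod n → ZMod n)
    (hconst : ∀ y y', ZMod.castHom h (ZMod m) (β y) = ZMod.castHom h (ZMod m) (β y')) :
    m ≤ (Set.range fun xy : ZMod n × ZMod n => α xy.1 * β xy.2 + xy.1 + xy.2).ncard := by
  set f := ZMod.castHom h (ZMod m)
  set S := Set.range fun xy : ZMod n × ZMod n => α xy.1 * β xy.2 + xy.1 + xy.2 with hS
  have hfsurj : Function.Surjective f := by
    intro a
    exact ⟨(a.val : ZMod n), by rw [map_natCast]; exact ZMod.natCast_zmod_val a⟩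
  have himg : Set.univ ⊆ f '' S := by
    intro a _
    obtain ⟨y, hy⟩ := hfsurj (a - f (α 0) * f (β 0))
    refine ⟨α 0 * β y + 0 + y, ⟨(0, y), rfl⟩, ?_⟩
    rw [map_add, map_add, map_mul, hconst y 0, hy, map_zero]
    ring
  calc m = Nat.card (ZMod m) := (Nat.card_zmod m).symm
    _ = (Set.univ : Set (ZMod m)).ncard := (Set.ncard_univ _).symm
    _ ≤ (f '' S).ncard := Set.ncard_le_ncard himg (Set.toFinite _)
    _ ≤ S.ncard := Set.ncard_image_le (Set.toFinite _)

theorem stmt_14 :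
    ∃ c : ℝ, 0 < c ∧ ∀ p q : ℕ, p.Prime → q.Prime → p ≠ q →
      ∀ α β : ZMod (p * q) → ZMod (p * q),
        c * min (p : ℝ) (q : ℝ) ≤
          ((Set.range (fun xy : ZMod (p * q) × ZMod (p * q) =>
            α xy.1 * β xy.2 + xy.1 + xy.2)).ncard : ℝ) := by
  refine ⟨1, one_pos, ?_⟩
  intro p q hp hq hpq α β
  haveI : Fact p.Prime := ⟨hp⟩
  haveI : Fact q.Prime := ⟨hq⟩
  haveI : NeZero (p * q) := ⟨Nat.mul_ne_zero hp.pos.ne' hq.pos.ne'⟩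
  rw [one_mul]
  set F : ZMod (p * q) × ZMod (p * q) → ZMod (p * q) :=
    fun xy => α xy.1 * β xy.2 + xy.1 + xy.2 with hF
  set S := Set.range F with hS
  have key : min p q ≤ S.ncard := by
    set fp := ZMod.castHom (dvd_mul_right p q) (ZMod p) with hfp
    set fq := ZMod.castHom (dvd_mul_left q p) (ZMod q) with hfq
    by_cases hcp : ∀ y y', fp (β y) = fp (β y')
    · exact le_trans (min_le_left p q) (aux_surj_case _ α β hcp)
    by_cases hcq : ∀ y y', fq (β y) = fq (β y')
    · exact le_trans (min_le_right p q) (aux_surj_case _ α β hcq)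
    push_neg at hcp hcq
    obtain ⟨y1, y2, h12⟩ := hcp
    obtain ⟨y3, y4, h34⟩ := hcq
    have claim : ∃ u v, fp (β u) ≠ fp (β v) ∧ fq (β u) ≠ fq (β v) := by
      by_cases a : fq (β y1) = fq (β y2)
      · by_cases b : fp (β y3) = fp (β y4)
        · by_cases c : fq (β y1) = fq (β y3)
          · by_cases d : fp (β y1) = fp (β y3)
            · exact ⟨y2, y4, fun h => h12 ((d.trans b).trans h.symm),
                fun h => h34 ((c.symm.trans a).trans h)⟩
            · exact ⟨y1, y4, fun h => d (h.trans b.symm), fun h => h34 (c.symm.trans h)⟩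
          · by_cases d : fp (β y1) = fp (β y3)
            · exact ⟨y2, y3, fun h => h12 (d.trans h.symm), fun h => c (a.trans h)⟩
            · exact ⟨y1, y3, d, c⟩
        · exact ⟨y3, y4, b, h34⟩
      · exact ⟨y1, y2, h12, a⟩
    obtain ⟨u, v, hupv, huqv⟩ := claim
    have hmemS : ∀ x y, F (x, y) ∈ S := fun x y => ⟨(x, y), rfl⟩
    set H : ZMod (p * q) → S × S :=
      fun x => (⟨F (x, u), hmemS x u⟩, ⟨F (x, v), hmemS x v⟩) with hH
    have hHinj : Function.Injective H := by
      intro x x' hxx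
      have h1 : α x * β u + x + u = α x' * β u + x' + u :=
        congrArg (fun z : S × S => (z.1 : ZMod (p * q))) hxx
      have h2 : α x * β v + x + v = α x' * β v + x' + v :=
        congrArg (fun z : S × S => (z.2 : ZMod (p * q))) hxx
      have h1' : α x * β u + x = α x' * β u + x' := by
        have := add_right_cancel h1; exact this
      have h2' : α x * β v + x = α x' * β v + x' := by
        have := add_right_cancel h2; exact this
      have hd : (α x - α x') * (β u - β v) = 0 := by linear_combination h1' - h2'
      have hmodp : fp x = fp x' := by
        have hp1 : (fp (α x) - fp (α x')) * (fp (β u) - fp (β v)) = 0 := by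
          simpa [map_sub, map_mul] using congrArg fp hd
        have hαp : fp (α x) = fp (α x') := by
          rcases mul_eq_zero.mp hp1 with h | h
          · exact sub_eq_zero.mp h
          · exact absurd (sub_eq_zero.mp h) hupv
        have := congrArg fp h1'
        simp only [map_add, map_mul, hαp] at this
        exact add_left_cancel this
      have hmodq : fq x = fq x' := by
        have hp1 : (fq (α x) - fq (α x')) * (fq (β u) - fq (β v)) = 0 := by
          simpa [map_sub, map_mul] using congrArg fq hd
        have hαq : fq (α x) = fq (α x') := by
          rcases mul_eq_zero.mp hp1 with h | h
          · exact sub_eq_zero.mp h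
          · exact absurd (sub_eq_zero.mp h) huqv
        have := congrArg fq h1'
        simp only [map_add, map_mul, hαq] at this
        exact add_left_cancel this
      -- deduce x = x'
      have hdp : fp (x - x') = 0 := by rw [map_sub, hmodp, sub_self]
      have hdq : fq (x - x') = 0 := by rw [map_sub, hmodq, sub_self]
      have hvp : (((x - x').val : ℕ) : ZMod p) = 0 := by
        rwa [ZMod.natCast_val, ← ZMod.castHom_apply (h := dvd_mul_right p q)]
      have hvq : (((x - x').val : ℕ) : ZMod q) = 0 := by
        rwa [ZMod.natCast_val, ← ZMod.castHom_apply (h := dvd_mul_left q p)]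
      have hdvp : p ∣ (x - x').val := (ZMod.natCast_eq_zero_iff _ _).mp hvp
      have hdvq : q ∣ (x - x').val := (ZMod.natCast_eq_zero_iff _ _).mp hvq
      have hcop : Nat.Coprime p q := (Nat.coprime_primes hp hq).mpr hpq
      have hdvpq : p * q ∣ (x - x').val := hcop.mul_dvd_of_dvd_of_dvd hdvp hdvq
      have hval0 : (x - x').val = 0 :=
        Nat.eq_zero_of_dvd_of_lt hdvpq (ZMod.val_lt _)
      have : x - x' = 0 := by
        rwa [ZMod.val_eq_zero] at hval0
      exact sub_eq_zero.mp this
    have hcount : p * q ≤ S.ncard * S.ncard := by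
      calc p * q = Nat.card (ZMod (p * q)) := (Nat.card_zmod _).symm
        _ ≤ Nat.card (S × S) := Nat.card_le_card_of_injective H hHinj
        _ = Nat.card S * Nat.card S := Nat.card_prod _ _
        _ = S.ncard * S.ncard := by rw [Nat.card_coe_set_eq]
    have hmin : min p q * min p q ≤ S.ncard * S.ncard :=
      le_trans (Nat.mul_le_mul (min_le_left p q) (min_le_right p q)) hcount
    exact Nat.mul_self_le_mul_self_iff.mp hmin
  have : ((min p q : ℕ) : ℝ) ≤ (S.ncard : ℝ) := Nat.cast_le.mpr key
  simpa [Nat.cast_min] using this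
end

section
/- Let q be a prime, S a finite set with |S|·q²·q! < (q−1)^q, f : S → ℤ/qℤ any function, and c₁, c₂, λ₁, λ₂, μ₁, μ₂ ∈ ℤ/qℤ fixed. Then there exist functions α : ℤ/qℤ → ℤ/qℤ and β_s : ℤ/qℤ → ℤ/qℤ for each s ∈ S such that for all x, y ∈ ℤ/qℤ and s ∈ S, α(x)β_s(y) + (α(x)+c₁x)(β_s(y)+c₂y) + λ₁α(x) + μ₁x + λ₂β_s(y) + μ₂y + f(s) ≠ 0. -/
/-! The form is affine in `b = β s y`: it equals `b * (2 a + c₁ x + l₂) + (terms free of b)` with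
`a = α x`. If every slope `2 α x + c₁ x + l₂` is nonzero, a value `β s y` avoiding all roots exists
unless the root map `x ↦ -offset / slope` is onto, i.e. a permutation `σ`. For fixed `(s, y, σ)` that
pins down `α x` at all but one `x`, so at most `q` choices of `α` are spoiled by each of the
`|S| q q!` triples, fewer than the `(q - 1)^q` functions with nonzero slopes. -/

open Finset

theorem exists_forall_mul_add_ne_zero_of_not_surjective {X K : Type*} [Field K] (u v : X → K)
    (hu : ∀ x, u x ≠ 0) (h : ¬ Function.Surjective fun x => -v x / u x) :
    ∃ b, ∀ x, b * u x + v x ≠ 0 := by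
  obtain ⟨b, hb⟩ := not_forall.mp h
  refine ⟨b, fun x hx => hb ⟨x, ?_⟩⟩
  rw [div_eq_iff (hu x)]
  linear_combination -hx

theorem card_filter_mul_add_ne_zero {K : Type*} [Field K] [Fintype K] [DecidableEq K] {a : K}
    (ha : a ≠ 0) (b : K) : #{z : K | a * z + b ≠ 0} = Fintype.card K - 1 := by
  have hroot : ∀ z, a * z + b ≠ 0 ↔ z ≠ -b / a := fun z => by
    rw [not_iff_not, eq_div_iff ha]
    constructor <;> intro h <;> linear_combination h
  simp_rw [hroot, filter_ne', card_erase_of_mem (mem_univ _), card_univ]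

theorem Fintype.card_piFinset_le_of_card_le_one {X : Type*} {β : X → Type*} [Fintype X]
    [DecidableEq X] [∀ x, DecidableEq (β x)] (t : ∀ x, Finset (β x)) (x₀ : X)
    (ht : ∀ x ≠ x₀, #(t x) ≤ 1) : #(piFinset t) ≤ #(t x₀) := by
  rw [card_piFinset, ← mul_prod_erase univ _ (mem_univ x₀)]
  exact mul_le_of_le_one_right (Nat.zero_le _) <|
    Finset.prod_le_one (fun _ _ => Nat.zero_le _) fun x hx => ht x (ne_of_mem_erase hx)

theorem Finset.exists_mem_forall_notMem_of_sum_card_lt {ι α : Type*} [DecidableEq α]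
    {A : Finset α} {T : Finset ι} (B : ι → Finset α) (h : ∑ t ∈ T, #(B t) < #A) :
    ∃ a ∈ A, ∀ t ∈ T, a ∉ B t := by
  by_contra! hcover
  have hsub : A ⊆ T.biUnion B := fun a ha => mem_biUnion.mpr (hcover a ha)
  exact (card_le_card hsub |>.trans card_biUnion_le).not_gt h

section Construction

variable {F S : Type*} [Field F] (c₁ c₂ l₁ l₂ m₁ m₂ : F) (f : S → F)

def formSlope (a x : F) : F := 2 * a + (c₁ * x + l₂)

def formOffset (a x y : F) (s : S) : F :=
  a * (c₂ * y + l₁) + c₁ * c₂ * x * y + m₁ * x + m₂ * y + f s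

theorem form_eq_mul_formSlope_add_formOffset (a b x y : F) (s : S) :
    a * b + (a + c₁ * x) * (b + c₂ * y) + l₁ * a + m₁ * x + l₂ * b + m₂ * y + f s
      = b * formSlope c₁ l₂ a x + formOffset c₁ c₂ l₁ m₁ m₂ f a x y s := by
  unfold formSlope formOffset
  ring

variable [Fintype F] [DecidableEq F]

theorem card_piFinset_formSlope_ne_zero (h2 : (2 : F) ≠ 0) :
    #(Fintype.piFinset fun x => {a | formSlope c₁ l₂ a x ≠ 0})
      = (Fintype.card F - 1) ^ Fintype.card F := by
  rw [Fintype.card_piFinset, ← card_univ, ← prod_const]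
  exact prod_congr rfl fun x _ => card_filter_mul_add_ne_zero h2 (c₁ * x + l₂)

/-- Prescribing `σ x` as the root in `b` forces `α x`, except at the one `x` where
`2 * σ x + c₂ * y + l₁` vanishes. -/
theorem card_piFinset_root_eq_perm_le (h2 : (2 : F) ≠ 0) (y : F) (s : S) (σ : Equiv.Perm F) :
    #(Fintype.piFinset fun x =>
      {a | σ x * formSlope c₁ l₂ a x + formOffset c₁ c₂ l₁ m₁ m₂ f a x y s = 0})
      ≤ Fintype.card F := by
  refine (Fintype.card_piFinset_le_of_card_le_one _ (σ.symm (-(c₂ * y + l₁) / 2)) ?_).trans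
    (card_le_univ _)
  intro x hx
  have hcoeff : 2 * σ x + (c₂ * y + l₁) ≠ 0 := fun h => hx <| by
    rw [Equiv.eq_symm_apply, eq_div_iff h2]
    linear_combination h
  refine card_le_one.mpr fun a ha b hb => ?_
  replace ha := (mem_filter.mp ha).2
  replace hb := (mem_filter.mp hb).2
  unfold formSlope formOffset at ha hb
  have hdiff : (a - b) * (2 * σ x + (c₂ * y + l₁)) = 0 := by linear_combination ha - hb
  exact sub_eq_zero.mp ((mul_eq_zero.mp hdiff).resolve_right hcoeff)

theorem exists_forall_form_ne_zero (h2 : (2 : F) ≠ 0) [Fintype S]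
    (hS : Fintype.card S * Fintype.card F ^ 2 * (Fintype.card F).factorial
      < (Fintype.card F - 1) ^ Fintype.card F) :
    ∃ (α : F → F) (β : S → F → F), ∀ (x y : F) (s : S),
      α x * β s y + (α x + c₁ * x) * (β s y + c₂ * y)
        + l₁ * α x + m₁ * x + l₂ * β s y + m₂ * y + f s ≠ 0 := by
  simp_rw [form_eq_mul_formSlope_add_formOffset]
  let bad : S × F × Equiv.Perm F → Finset (F → F) := fun ⟨s, y, σ⟩ => Fintype.piFinset fun x =>
    {a | σ x * formSlope c₁ l₂ a x + formOffset c₁ c₂ l₁ m₁ m₂ f a x y s = 0}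
  obtain ⟨α, hα, hαbad⟩ := exists_mem_forall_notMem_of_sum_card_lt (T := univ) bad <|
    calc ∑ t, #(bad t) ≤ ∑ _t : S × F × Equiv.Perm F, Fintype.card F :=
          sum_le_sum fun ⟨s, y, σ⟩ _ => card_piFinset_root_eq_perm_le c₁ c₂ l₁ l₂ m₁ m₂ f h2 y s σ
      _ = Fintype.card S * Fintype.card F ^ 2 * (Fintype.card F).factorial := by
          simp only [sum_const, card_univ, Fintype.card_prod, Fintype.card_perm, smul_eq_mul]
          ring
      _ < _ := hS
      _ = _ := (card_piFinset_formSlope_ne_zero c₁ l₂ h2).symm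
  have hslope : ∀ x, formSlope c₁ l₂ (α x) x ≠ 0 := by simpa using hα
  have hnot_surj : ∀ s y, ¬ Function.Surjective fun x =>
      -formOffset c₁ c₂ l₁ m₁ m₂ f (α x) x y s / formSlope c₁ l₂ (α x) x := by
    intro s y hsurj
    refine hαbad (s, y, Equiv.ofBijective _ hsurj.bijective_of_finite) (mem_univ _) ?_
    simp only [bad, Fintype.mem_piFinset, mem_filter, mem_univ, true_and,
      Equiv.ofBijective_apply]
    intro x
    rw [div_mul_cancel₀ _ (hslope x), neg_add_cancel]
  choose β hβ using fun s y =>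
    exists_forall_mul_add_ne_zero_of_not_surjective _ _ hslope (hnot_surj s y)
  exact ⟨α, β, fun x y s => hβ s y x⟩

end Construction

theorem stmt_17 (q : ℕ) (hq : q.Prime) (S : Type) [Fintype S]
    (hS : Fintype.card S * q ^ 2 * Nat.factorial q < (q - 1) ^ q)
    (f : S → ZMod q) (c₁ c₂ l₁ l₂ m₁ m₂ : ZMod q) :
    ∃ (α : ZMod q → ZMod q) (β : S → ZMod q → ZMod q),
      ∀ (x y : ZMod q) (s : S),
        α x * β s y + (α x + c₁ * x) * (β s y + c₂ * y)
          + l₁ * α x + m₁ * x + l₂ * β s y + m₂ * y + f s ≠ 0 := by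
  have : Fact q.Prime := ⟨hq⟩
  rcases isEmpty_or_nonempty S with _ | _
  · exact ⟨0, 0, fun _ _ s => isEmptyElim s⟩
  have h2 : (2 : ZMod q) ≠ 0 := by
    intro h
    obtain rfl : q = 2 := (Nat.prime_dvd_prime_iff_eq hq Nat.prime_two).mp <|
      (ZMod.natCast_eq_zero_iff 2 q).mp (by exact_mod_cast h)
    have := Fintype.card_pos (α := S)
    simp only [Nat.factorial] at hS
    omega
  exact exists_forall_form_ne_zero c₁ c₂ l₁ l₂ m₁ m₂ f h2 (by rwa [ZMod.card])
end
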